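/- arXiv:2305.01769 — 5 statements merged into one kernel-verified Lean document; each statement's English description precedes it below -/
import Mathlib

section
/- Let H be a finite simple graph with maximum degree δ, let w : ℕ → ℝ be 1-concave with w(2) − w(1) < 1, and let E be the approval election whose candidates are the vertices of H and whose voters are: for each edge {u,v} of H, one voter approving exactly {u,v}; and for each vertex v, exactly δ − d(v) voters approving exactly {v}, where d(v) is the degree of v. Then every size-k committee S has w-score at most δk, with equality if and only if S is an independent set of H; moreover, if S is not independent then its w-score is at most (δk − 1) + (w(2) − w(1)). -/
open Finset

/-- The `w`-score of a committee `S`. -/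
def wScore {C V : Type} [DecidableEq C] [Fintype V]
    (w : ℕ → ℝ) (A : V → Finset C) (S : Finset C) : ℝ :=
  ∑ v : V, w ((A v ∩ S).card)

/-- A finite set of vertices is independent: no two of its members are adjacent. -/
def IsIndepFinset {α : Type} (G : SimpleGraph α) (S : Finset α) : Prop :=
  ∀ u ∈ S, ∀ v ∈ S, ¬ G.Adj u v

/-- The voters of the election built from a graph `H` with degree bound `δ`:
one voter per edge, and `δ - d(v)` voters per vertex `v`. -/
abbrev GraphVoter {α : Type} [Fintype α] [DecidableEq α]
    (H : SimpleGraph α) [DecidableRel H.Adj] (δ : ℕ) : Type :=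
  ↥H.edgeFinset ⊕ (Σ v : α, Fin (δ - H.degree v))

/-- The approval sets: the voter of edge `{u,v}` approves exactly `{u,v}`; each of the
`δ - d(v)` voters of vertex `v` approves exactly `{v}`. -/
def graphApproval {α : Type} [Fintype α] [DecidableEq α]
    (H : SimpleGraph α) [DecidableRel H.Adj] (δ : ℕ) :
    GraphVoter H δ → Finset α
  | .inl e => Finset.univ.filter (fun x => x ∈ (e : Sym2 α))
  | .inr ⟨v, _⟩ => {v}

/-! An edge voter contributes `|e ∩ S|`, except that an edge inside `S` contributes `w 2`
instead of `2`, and each `v ∈ S` receives `δ - d(v)` further singleton votes. Double counting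
the edge contributions gives `score(S) = δ|S| - (2 - w 2) · e(S)`, where `e(S)` is the number of
edges inside `S`; since `2 - w 2 > 0`, everything follows from `e(S) = 0 ↔ S` independent. -/

lemma Finset.card_filter_mem_sym2_mk {α : Type*} [DecidableEq α] (S : Finset α) {u v : α}
    (huv : u ≠ v) :
    #{x ∈ S | x ∈ s(u, v)} = (if u ∈ S then 1 else 0) + (if v ∈ S then 1 else 0) := by
  simp only [Sym2.mem_iff, filter_or, filter_eq']
  split_ifs <;> simp [card_pair huv]

namespace SimpleGraph

variable {α : Type} [Fintype α] (H : SimpleGraph α) [DecidableRel H.Adj]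

lemma isIndepFinset_iff_disjoint_edgeFinset_sym2 (S : Finset α) :
    IsIndepFinset H S ↔ Disjoint H.edgeFinset S.sym2 := by
  rw [Finset.disjoint_left]
  constructor
  · intro hS e he heS
    induction e using Sym2.ind with
    | _ u v =>
      rw [mem_edgeFinset, mem_edgeSet] at he
      rw [mk_mem_sym2_iff] at heS
      exact hS u heS.1 v heS.2 he
  · intro hE u hu v hv huv
    exact hE (mem_edgeFinset.mpr huv) (mk_mem_sym2_iff.mpr ⟨hu, hv⟩)

variable [DecidableEq α]

lemma sum_card_filter_mem_edgeFinset (S : Finset α) :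
    ∑ e ∈ H.edgeFinset, #{x ∈ S | x ∈ e} = ∑ v ∈ S, H.degree v := by
  simp only [card_filter]
  rw [sum_comm]
  refine sum_congr rfl fun v _ => ?_
  rw [← card_filter, ← incidenceFinset_eq_filter, card_incidenceFinset_eq_degree]

end SimpleGraph

section GraphElection

open SimpleGraph

variable {α : Type} [Fintype α] [DecidableEq α] (H : SimpleGraph α) [DecidableRel H.Adj]
  {w : ℕ → ℝ}

lemma apply_card_filter_mem_of_mem_edgeFinset (hw0 : w 0 = 0) (hw1 : w 1 = 1) (S : Finset α)
    {e : Sym2 α} (he : e ∈ H.edgeFinset) :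
    w #{x ∈ S | x ∈ e} = #{x ∈ S | x ∈ e} - (2 - w 2) * if e ∈ S.sym2 then 1 else 0 := by
  induction e using Sym2.ind with
  | _ u v =>
    have huv : u ≠ v := (mem_edgeFinset.mp he).ne
    rw [card_filter_mem_sym2_mk S huv]
    simp only [mk_mem_sym2_iff]
    by_cases hu : u ∈ S <;> by_cases hv : v ∈ S <;> simp [hu, hv, hw0, hw1]

lemma sum_apply_card_filter_mem_edgeFinset (hw0 : w 0 = 0) (hw1 : w 1 = 1) (S : Finset α) :
    ∑ e ∈ H.edgeFinset, w #{x ∈ S | x ∈ e}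
      = ∑ v ∈ S, (H.degree v : ℝ) - (2 - w 2) * #(H.edgeFinset ∩ S.sym2) := by
  rw [sum_congr rfl fun e he => apply_card_filter_mem_of_mem_edgeFinset H hw0 hw1 S he,
    sum_sub_distrib, ← mul_sum, sum_boole, filter_mem_eq_inter, ← Nat.cast_sum, ← Nat.cast_sum,
    sum_card_filter_mem_edgeFinset]

lemma wScore_graphApproval_eq_sum_edgeFinset_add (δ : ℕ) (hδ : ∀ v, H.degree v ≤ δ)
    (hw0 : w 0 = 0) (hw1 : w 1 = 1) (S : Finset α) :
    wScore w (graphApproval H δ) S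
      = ∑ e ∈ H.edgeFinset, w #{x ∈ S | x ∈ e} + ∑ v ∈ S, ((δ : ℝ) - H.degree v) := by
  rw [wScore, Fintype.sum_sum_type, Fintype.sum_sigma, ← sum_coe_sort H.edgeFinset]
  congr 1
  · refine sum_congr rfl fun e _ => ?_
    simp only [graphApproval]
    congr 2
    ext x
    simp [and_comm]
  · have hvertex : ∀ v, ∑ _i : Fin (δ - H.degree v), w #(({v} : Finset α) ∩ S)
        = if v ∈ S then (δ : ℝ) - H.degree v else 0 := by
      intro v
      by_cases hv : v ∈ S
      · simp [hv, hw1, Nat.cast_sub (hδ v)]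
      · simp [hv, hw0]
    simp only [graphApproval, hvertex, sum_ite_mem, univ_inter]

theorem wScore_graphApproval (δ : ℕ) (hδ : ∀ v, H.degree v ≤ δ)
    (hw0 : w 0 = 0) (hw1 : w 1 = 1) (S : Finset α) :
    wScore w (graphApproval H δ) S = δ * #S - (2 - w 2) * #(H.edgeFinset ∩ S.sym2) := by
  rw [wScore_graphApproval_eq_sum_edgeFinset_add H δ hδ hw0 hw1,
    sum_apply_card_filter_mem_edgeFinset H hw0 hw1, sum_sub_distrib, sum_const, nsmul_eq_mul]
  ring

end GraphElection

theorem stmt1_general {α : Type} [Fintype α] [DecidableEq α]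
    (H : SimpleGraph α) [DecidableRel H.Adj] (δ : ℕ)
    (hδ : ∀ v : α, H.degree v ≤ δ)
    (w : ℕ → ℝ) (hw0 : w 0 = 0) (hw1 : w 1 = 1)
    (hx : w 2 - w 1 < 1) (k : ℕ) (S : Finset α) (hS : S.card = k) :
    wScore w (graphApproval H δ) S ≤ δ * k
    ∧ (wScore w (graphApproval H δ) S = δ * k ↔ IsIndepFinset H S)
    ∧ (¬ IsIndepFinset H S →
        wScore w (graphApproval H δ) S ≤ (δ * k - 1) + (w 2 - w 1)) := by
  have hpenalty : 0 < 2 - w 2 := by linarith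
  have hindep : IsIndepFinset H S ↔ #(H.edgeFinset ∩ S.sym2) = 0 := by
    rw [H.isIndepFinset_iff_disjoint_edgeFinset_sym2, disjoint_iff_inter_eq_empty, card_eq_zero]
  rw [wScore_graphApproval H δ hδ hw0 hw1, hS, hindep]
  set t := #(H.edgeFinset ∩ S.sym2)
  refine ⟨?_, ?_, fun ht => ?_⟩
  · have : (0 : ℝ) ≤ (2 - w 2) * t := by positivity
    linarith
  · simp [hpenalty.ne']
  · have : (1 : ℝ) ≤ t := by exact_mod_cast Nat.one_le_iff_ne_zero.mpr ht
    nlinarith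

theorem stmt1 {α : Type} [Fintype α] [DecidableEq α]
    (H : SimpleGraph α) [DecidableRel H.Adj] (δ : ℕ)
    (hδ : ∀ v : α, H.degree v ≤ δ)
    (w : ℕ → ℝ) (hw0 : w 0 = 0) (hw1 : w 1 = 1) (hmono : Monotone w)
    (hconc : ∀ i : ℕ, 1 ≤ i → w i - w (i - 1) ≥ w (i + 1) - w i)
    (hx : w 2 - w 1 < 1) (k : ℕ) (S : Finset α) (hS : S.card = k) :
    wScore w (graphApproval H δ) S ≤ δ * k
    ∧ (wScore w (graphApproval H δ) S = δ * k ↔ IsIndepFinset H S)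
    ∧ (¬ IsIndepFinset H S →
        wScore w (graphApproval H δ) S ≤ (δ * k - 1) + (w 2 - w 1)) :=
  stmt1_general H δ hδ w hw0 hw1 hx k S hS
end

section
/- Let G be a finite simple graph, let w : ℕ → ℝ be 1-concave with w(2) < 2, and let E(G) be the edge election of G. Then for every set W of k edge-candidates, the w-score of W in E(G) is at most 2k, with equality if and only if W is a size-k matching of G; if W is not a matching then its w-score is strictly less than 2k. -/
open Finset

/-- Approval sets of the edge election of a graph `G`: the candidates are the edges of
`G`, the voters are the vertices, and each vertex approves exactly its incident edges. -/
def edgeApproval {α : Type} [Fintype α] [DecidableEq α]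
    (G : SimpleGraph α) [DecidableRel G.Adj] (v : α) : Finset ↥G.edgeFinset :=
  Finset.univ.filter (fun e => v ∈ (e : Sym2 α))

/-- A finite set of edge candidates is a matching if no two of its edges share a vertex. -/
def IsMatchingFinset {α : Type} [Fintype α] [DecidableEq α]
    (G : SimpleGraph α) [DecidableRel G.Adj] (M : Finset ↥G.edgeFinset) : Prop :=
  ∀ e ∈ M, ∀ f ∈ M, e ≠ f → ∀ x : α, x ∈ (e : Sym2 α) → x ∉ (f : Sym2 α)

/-!
A 1-concave weight has all increments at most `w 1 - w 0 = 1`, so `w n ≤ n`, and `w n < n`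
once `n ≥ 2` as soon as `w 2 < 2`. Hence the `w`-score of `W` is at most the total number of
approvals `∑ v, #(A v ∩ W)`, with equality iff every voter approves at most one member of `W`.
In the edge election that total is `2 * #W` (every edge has two endpoints), and "every vertex
lies on at most one edge of `W`" is exactly the matching condition.
-/

section ConcaveWeight

variable {w : ℕ → ℝ}

lemma sub_le_one_of_concave (hw0 : w 0 = 0) (hw1 : w 1 = 1)
    (hconc : ∀ i : ℕ, 1 ≤ i → w i - w (i - 1) ≥ w (i + 1) - w i) (i : ℕ) :
    w (i + 1) - w i ≤ 1 := by
  induction i with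
  | zero => simp [hw0, hw1]
  | succ n ih =>
    have := hconc (n + 1) (Nat.le_add_left 1 n)
    rw [Nat.add_sub_cancel] at this
    linarith

lemma le_self_of_sub_le_one (hw0 : w 0 = 0) (hstep : ∀ i, w (i + 1) - w i ≤ 1) (n : ℕ) :
    w n ≤ n := by
  induction n with
  | zero => simp [hw0]
  | succ n ih =>
    push_cast
    linarith [hstep n]

lemma lt_self_of_sub_le_one (hstep : ∀ i, w (i + 1) - w i ≤ 1) (hw2 : w 2 < 2) {n : ℕ}
    (hn : 2 ≤ n) : w n < n := by
  induction n, hn using Nat.le_induction with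
  | base => simpa using hw2
  | succ n _ ih =>
    push_cast
    linarith [hstep n]

end ConcaveWeight

section Score

variable {C V : Type} [DecidableEq C] [Fintype V] {w : ℕ → ℝ}

lemma wScore_le_sum_card (hw : ∀ n, w n ≤ n) (A : V → Finset C) (S : Finset C) :
    wScore w A S ≤ ∑ v, (#(A v ∩ S) : ℝ) :=
  sum_le_sum fun _ _ => hw _

lemma wScore_eq_sum_card_iff (hw0 : w 0 = 0) (hw1 : w 1 = 1) (hw : ∀ n, w n ≤ n)
    (hlt : ∀ n, 2 ≤ n → w n < n) (A : V → Finset C) (S : Finset C) :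
    wScore w A S = ∑ v, (#(A v ∩ S) : ℝ) ↔ ∀ v, #(A v ∩ S) ≤ 1 := by
  constructor
  · intro heq v
    by_contra! hv
    exact heq.not_lt <| sum_lt_sum (fun _ _ => hw _) ⟨v, mem_univ v, hlt _ hv⟩
  · intro hle
    refine sum_congr rfl fun v _ => ?_
    rcases Nat.le_one_iff_eq_zero_or_eq_one.mp (hle v) with h | h <;> simp [h, hw0, hw1]

end Score

section EdgeElection

variable {α : Type} [Fintype α] [DecidableEq α] (G : SimpleGraph α) [DecidableRel G.Adj]

lemma edgeApproval_inter (v : α) (W : Finset ↥G.edgeFinset) :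
    edgeApproval G v ∩ W = {e ∈ W | v ∈ e.1} := by
  ext e
  simp [edgeApproval, and_comm]

lemma sum_card_edgeApproval_inter (W : Finset ↥G.edgeFinset) :
    ∑ v, #(edgeApproval G v ∩ W) = 2 * #W := by
  have hends : ∀ e : ↥G.edgeFinset, #{v | v ∈ e.1} = 2 := fun e => by
    rw [← G.card_toFinset_mem_edgeFinset e]
    congr 1
    ext v
    simp
  simp_rw [edgeApproval_inter]
  calc ∑ v, #{e ∈ W | v ∈ e.1}
      = ∑ e ∈ W, #{v | v ∈ e.1} :=
        sum_card_bipartiteAbove_eq_sum_card_bipartiteBelow (fun (v : α) (e : ↥G.edgeFinset) => v ∈ e.1)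
    _ = 2 * #W := by rw [sum_congr rfl fun e _ => hends e, sum_const, smul_eq_mul, mul_comm]

lemma isMatchingFinset_iff_card_edgeApproval_inter_le_one (W : Finset ↥G.edgeFinset) :
    IsMatchingFinset G W ↔ ∀ v, #(edgeApproval G v ∩ W) ≤ 1 := by
  simp_rw [edgeApproval_inter, card_le_one, mem_filter]
  constructor
  · intro hM v e he f hf
    by_contra hne
    exact hM e he.1 f hf.1 hne v he.2 hf.2
  · intro h e he f hf hne v hve hvf
    exact hne (h v e ⟨he, hve⟩ f ⟨hf, hvf⟩)

end EdgeElection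

theorem stmt9_general {α : Type} [Fintype α] [DecidableEq α]
    (G : SimpleGraph α) [DecidableRel G.Adj]
    (w : ℕ → ℝ) (hw0 : w 0 = 0) (hw1 : w 1 = 1)
    (hconc : ∀ i : ℕ, 1 ≤ i → w i - w (i - 1) ≥ w (i + 1) - w i)
    (hw2 : w 2 < 2) (k : ℕ) (W : Finset ↥G.edgeFinset) (hW : W.card = k) :
    wScore w (edgeApproval G) W ≤ 2 * k
    ∧ (wScore w (edgeApproval G) W = 2 * k ↔ IsMatchingFinset G W)
    ∧ (¬ IsMatchingFinset G W → wScore w (edgeApproval G) W < 2 * k) := by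
  have hstep := sub_le_one_of_concave hw0 hw1 hconc
  have hle := le_self_of_sub_le_one hw0 hstep
  have htotal : ∑ v, (#(edgeApproval G v ∩ W) : ℝ) = 2 * k := by
    rw [← hW]
    exact_mod_cast sum_card_edgeApproval_inter G W
  have hbound : wScore w (edgeApproval G) W ≤ 2 * k :=
    htotal ▸ wScore_le_sum_card hle _ W
  have heq_iff : wScore w (edgeApproval G) W = 2 * k ↔ IsMatchingFinset G W := by
    rw [← htotal, isMatchingFinset_iff_card_edgeApproval_inter_le_one,
      wScore_eq_sum_card_iff hw0 hw1 hle (fun n => lt_self_of_sub_le_one hstep hw2)]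
  exact ⟨hbound, heq_iff, fun hM => hbound.lt_of_ne (mt heq_iff.mp hM)⟩

theorem stmt9 {α : Type} [Fintype α] [DecidableEq α]
    (G : SimpleGraph α) [DecidableRel G.Adj]
    (w : ℕ → ℝ) (hw0 : w 0 = 0) (hw1 : w 1 = 1) (hmono : Monotone w)
    (hconc : ∀ i : ℕ, 1 ≤ i → w i - w (i - 1) ≥ w (i + 1) - w i)
    (hw2 : w 2 < 2) (k : ℕ) (W : Finset ↥G.edgeFinset) (hW : W.card = k) :
    wScore w (edgeApproval G) W ≤ 2 * k
    ∧ (wScore w (edgeApproval G) W = 2 * k ↔ IsMatchingFinset G W)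
    ∧ (¬ IsMatchingFinset G W → wScore w (edgeApproval G) W < 2 * k) :=
  stmt9_general G w hw0 hw1 hconc hw2 k W hW
end

section
/- Let G be a finite simple graph, let w : ℕ → ℝ be 1-concave with w(2) < 2, and let k ≥ 1. Let E = E(G) be the edge election of G and let E_p be E with one additional candidate p and two additional voters each approving only p. Then: (i) the committees in Greedy_w(E_p, k) that do not contain p are exactly the size-k matchings of G; (ii) the committees in Greedy_w(E_p, k) that contain p are exactly the sets M ∪ {p} with M ∈ Greedy_w(E, k−1); consequently (iii) |Greedy_w(E_p, k)| equals the number of size-k matchings of G plus |Greedy_w(E, k−1)|. -/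
open Finset

/-- Greedy `w`-sequences: lists of distinct candidates in which each candidate maximizes
the marginal `w`-score with respect to the set of earlier candidates. -/
inductive GreedySeq {C V : Type} [DecidableEq C] [Fintype V]
    (w : ℕ → ℝ) (A : V → Finset C) : List C → Prop
  | nil : GreedySeq w A []
  | snoc (l : List C) (c : C) :
      GreedySeq w A l → c ∉ l →
      (∀ c' : C, c' ∉ l →
        wScore w A (insert c' l.toFinset) - wScore w A l.toFinset ≤
          wScore w A (insert c l.toFinset) - wScore w A l.toFinset) →
      GreedySeq w A (l ++ [c])

/-- The greedy `w`-Thiele rule with parallel-universes tie-breaking: all committees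
arising from greedy `w`-sequences of length `k`. -/
def GreedyRule {C V : Type} [DecidableEq C] [Fintype V]
    (w : ℕ → ℝ) (A : V → Finset C) (k : ℕ) : Set (Finset C) :=
  {S | ∃ l : List C, GreedySeq w A l ∧ l.length = k ∧ l.toFinset = S}

/-- Approval sets of the election `E_p`: the candidates are the edges of `G` together
with one extra candidate `p` (encoded as `none`), the voters are the vertices of `G`
together with two extra voters, each of whom approves only `p`. -/
def edgeApprovalP {α : Type} [Fintype α] [DecidableEq α]
    (G : SimpleGraph α) [DecidableRel G.Adj] :
    α ⊕ Fin 2 → Finset (Option ↥G.edgeFinset)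
  | .inl v => (edgeApproval G v).map Function.Embedding.some
  | .inr _ => {none}

/-!
While `p` is unselected its marginal gain is `2`. An edge `{x, y}` gains
`Δ(deg x) + Δ(deg y)` with `Δ n = w (n + 1) - w n`, and 1-concavity gives `Δ 0 = 1`,
`Δ n ≤ w 2 - 1 < 1` for `n ≥ 1`; so an edge gains at most `2`, with equality exactly when both
endpoints are still uncovered. Hence a greedy sequence avoiding `p` is a matching, and every
matching is one. Choosing `p` is always optimal while it is available; once chosen, the two extra
voters are saturated and the gains of the edges are those of the plain edge election.
-/

section Greedy

variable {C V : Type} [DecidableEq C] [Fintype V]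

def marginalGain (w : ℕ → ℝ) (A : V → Finset C) (S : Finset C) (c : C) : ℝ :=
  wScore w A (insert c S) - wScore w A S

theorem marginalGain_eq_sum (w : ℕ → ℝ) (A : V → Finset C) {S : Finset C} {c : C}
    (hc : c ∉ S) :
    marginalGain w A S c = ∑ v with c ∈ A v, (w (#(A v ∩ S) + 1) - w #(A v ∩ S)) := by
  rw [marginalGain, wScore, wScore, ← sum_sub_distrib, sum_filter]
  refine sum_congr rfl fun v _ => ?_
  split_ifs with hv
  · rw [inter_insert_of_mem hv, card_insert_of_notMem fun h => hc (mem_of_mem_inter_right h)]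
  · rw [inter_insert_of_notMem hv, sub_self]

theorem GreedySeq.nodup {w : ℕ → ℝ} {A : V → Finset C} {l : List C} (h : GreedySeq w A l) :
    l.Nodup := by
  induction h with
  | nil => exact List.nodup_nil
  | snoc l c _ hc _ ih => exact ih.append (List.nodup_singleton c) (by simpa using hc)

end Greedy

section OneConcave

variable {w : ℕ → ℝ}

theorem antitone_increment (hconc : ∀ i : ℕ, 1 ≤ i → w i - w (i - 1) ≥ w (i + 1) - w i) :
    Antitone fun n => w (n + 1) - w n :=
  antitone_nat_of_succ_le fun n => by simpa using hconc (n + 1) (by omega)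

theorem increment_le_one (hw0 : w 0 = 0) (hw1 : w 1 = 1)
    (hconc : ∀ i : ℕ, 1 ≤ i → w i - w (i - 1) ≥ w (i + 1) - w i) (n : ℕ) :
    w (n + 1) - w n ≤ 1 := by
  simpa [hw0, hw1] using antitone_increment hconc n.zero_le

theorem increment_lt_one (hw1 : w 1 = 1)
    (hconc : ∀ i : ℕ, 1 ≤ i → w i - w (i - 1) ≥ w (i + 1) - w i) (hw2 : w 2 < 2)
    {n : ℕ} (hn : n ≠ 0) : w (n + 1) - w n < 1 := by
  have := antitone_increment hconc (Nat.one_le_iff_ne_zero.2 hn)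
  norm_num [hw1] at this
  linarith

end OneConcave

theorem SimpleGraph.exists_adj_eq_mk_of_mem_edgeSet {α : Type} {G : SimpleGraph α} {e : Sym2 α}
    (he : e ∈ G.edgeSet) : ∃ x y, G.Adj x y ∧ e = s(x, y) := by
  induction e using Sym2.ind with
  | _ x y => exact ⟨x, y, he, rfl⟩

section EdgeElection

variable {α : Type} [Fintype α] [DecidableEq α] {G : SimpleGraph α} [DecidableRel G.Adj]
  {w : ℕ → ℝ}

theorem mem_edgeApproval {v : α} {e : G.edgeFinset} :
    e ∈ edgeApproval G v ↔ v ∈ (e : Sym2 α) := by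
  simp [edgeApproval]

theorem marginalGain_edgeApproval {T : Finset G.edgeFinset} {e : G.edgeFinset} (he : e ∉ T)
    {x y : α} (hxy : x ≠ y) (hexy : (e : Sym2 α) = s(x, y)) :
    marginalGain w (edgeApproval G) T e =
      (w (#(edgeApproval G x ∩ T) + 1) - w #(edgeApproval G x ∩ T)) +
        (w (#(edgeApproval G y ∩ T) + 1) - w #(edgeApproval G y ∩ T)) := by
  have hvoters : filter (e ∈ edgeApproval G ·) univ = {x, y} := by
    ext v
    simp [mem_edgeApproval, hexy]
  rw [marginalGain_eq_sum _ _ he, hvoters, sum_pair hxy]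

theorem marginalGain_edgeApproval_le_two (hw0 : w 0 = 0) (hw1 : w 1 = 1)
    (hconc : ∀ i : ℕ, 1 ≤ i → w i - w (i - 1) ≥ w (i + 1) - w i)
    {T : Finset G.edgeFinset} {e : G.edgeFinset} (he : e ∉ T) :
    marginalGain w (edgeApproval G) T e ≤ 2 := by
  obtain ⟨x, y, hxy, hexy⟩ := G.exists_adj_eq_mk_of_mem_edgeSet (G.mem_edgeFinset.1 e.2)
  rw [marginalGain_edgeApproval he hxy.ne hexy]
  linarith [increment_le_one hw0 hw1 hconc #(edgeApproval G x ∩ T),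
    increment_le_one hw0 hw1 hconc #(edgeApproval G y ∩ T)]

theorem marginalGain_edgeApproval_eq_two_iff (hw0 : w 0 = 0) (hw1 : w 1 = 1)
    (hconc : ∀ i : ℕ, 1 ≤ i → w i - w (i - 1) ≥ w (i + 1) - w i) (hw2 : w 2 < 2)
    {T : Finset G.edgeFinset} {e : G.edgeFinset} (he : e ∉ T) :
    marginalGain w (edgeApproval G) T e = 2 ↔
      ∀ f ∈ T, ∀ z ∈ (e : Sym2 α), z ∉ (f : Sym2 α) := by
  obtain ⟨x, y, hxy, hexy⟩ := G.exists_adj_eq_mk_of_mem_edgeSet (G.mem_edgeFinset.1 e.2)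
  have hfree : (∀ f ∈ T, ∀ z ∈ (e : Sym2 α), z ∉ (f : Sym2 α)) ↔
      #(edgeApproval G x ∩ T) = 0 ∧ #(edgeApproval G y ∩ T) = 0 := by
    simp only [card_eq_zero, eq_empty_iff_forall_notMem, mem_inter, mem_edgeApproval, hexy,
      Sym2.mem_iff, forall_eq_or_imp, forall_eq, not_and']
    constructor
    · intro h; exact ⟨fun f hf => (h f hf).1, fun f hf => (h f hf).2⟩
    · intro h f hf; exact ⟨h.1 f hf, h.2 f hf⟩
  have hx := increment_le_one hw0 hw1 hconc #(edgeApproval G x ∩ T)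
  have hy := increment_le_one hw0 hw1 hconc #(edgeApproval G y ∩ T)
  rw [marginalGain_edgeApproval he hxy.ne hexy, hfree]
  constructor
  · intro h
    by_contra hne
    rcases not_and_or.1 hne with h0 | h0
    · linarith [increment_lt_one hw1 hconc hw2 h0]
    · linarith [increment_lt_one hw1 hconc hw2 h0]
  · rintro ⟨h0x, h0y⟩
    rw [h0x, h0y]
    norm_num [hw0, hw1]

theorem isMatchingFinset_insert {M : Finset G.edgeFinset} {e : G.edgeFinset} (he : e ∉ M) :
    IsMatchingFinset G (insert e M) ↔
      IsMatchingFinset G M ∧ ∀ f ∈ M, ∀ z ∈ (e : Sym2 α), z ∉ (f : Sym2 α) := by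
  constructor
  · intro h
    refine ⟨fun f hf g hg => h f (mem_insert_of_mem hf) g (mem_insert_of_mem hg),
      fun f hf => h e (mem_insert_self e M) f (mem_insert_of_mem hf) ?_⟩
    rintro rfl
    exact he hf
  · rintro ⟨hM, hfree⟩ f hf g hg hfg z hzf hzg
    rcases mem_insert.1 hf with rfl | hfM <;> rcases mem_insert.1 hg with rfl | hgM
    · exact hfg rfl
    · exact hfree g hgM z hzf hzg
    · exact hfree f hfM z hzg hzf
    · exact hM f hfM g hgM hfg z hzf hzg

end EdgeElection

theorem Finset.card_map_some_inter {β : Type} [DecidableEq β] (A : Finset β)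
    (S : Finset (Option β)) : #(A.map Function.Embedding.some ∩ S) = #(A ∩ S.eraseNone) := by
  rw [← card_map Function.Embedding.some (s := A ∩ S.eraseNone), map_inter, map_some_eraseNone,
    inter_erase, erase_eq_of_notMem (by simp)]

theorem List.toFinset_reduceOption {β : Type} [DecidableEq β] (l : List (Option β)) :
    l.reduceOption.toFinset = l.toFinset.eraseNone := by
  ext
  simp [List.reduceOption_mem_iff]

section AugmentedElection

variable {α : Type} [Fintype α] [DecidableEq α] {G : SimpleGraph α} [DecidableRel G.Adj]
  {w : ℕ → ℝ}

theorem wScore_edgeApprovalP (S : Finset (Option G.edgeFinset)) :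
    wScore w (edgeApprovalP G) S =
      wScore w (edgeApproval G) S.eraseNone + 2 * w #({none} ∩ S) := by
  simp [wScore, edgeApprovalP, Fintype.sum_sum_type, card_map_some_inter, two_mul]

theorem marginalGain_edgeApprovalP_none (hw0 : w 0 = 0) (hw1 : w 1 = 1)
    {S : Finset (Option G.edgeFinset)} (hS : none ∉ S) :
    marginalGain w (edgeApprovalP G) S none = 2 := by
  have hT : (insert none S).eraseNone = S.eraseNone := by ext; simp
  rw [marginalGain, wScore_edgeApprovalP, wScore_edgeApprovalP, hT,
    singleton_inter_of_mem (mem_insert_self _ _), singleton_inter_of_notMem hS]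
  simp [hw0, hw1]

theorem marginalGain_edgeApprovalP_some (S : Finset (Option G.edgeFinset)) (e : G.edgeFinset) :
    marginalGain w (edgeApprovalP G) S (some e) =
      marginalGain w (edgeApproval G) S.eraseNone e := by
  have hT : (insert (some e) S).eraseNone = insert e S.eraseNone := by ext; simp
  rw [marginalGain, marginalGain, wScore_edgeApprovalP, wScore_edgeApprovalP, hT,
    inter_insert_of_notMem (by simp)]
  ring

theorem marginalGain_edgeApprovalP_le_two (hw0 : w 0 = 0) (hw1 : w 1 = 1)
    (hconc : ∀ i : ℕ, 1 ≤ i → w i - w (i - 1) ≥ w (i + 1) - w i)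
    {S : Finset (Option G.edgeFinset)} {c : Option G.edgeFinset} (hc : c ∉ S) :
    marginalGain w (edgeApprovalP G) S c ≤ 2 := by
  cases c with
  | none => exact (marginalGain_edgeApprovalP_none hw0 hw1 hc).le
  | some e =>
    rw [marginalGain_edgeApprovalP_some]
    exact marginalGain_edgeApproval_le_two hw0 hw1 hconc (by simpa using hc)

theorem GreedySeq.reduceOption_of_edgeApprovalP (hw0 : w 0 = 0) (hw1 : w 1 = 1)
    (hconc : ∀ i : ℕ, 1 ≤ i → w i - w (i - 1) ≥ w (i + 1) - w i)
    {l : List (Option G.edgeFinset)} (h : GreedySeq w (edgeApprovalP G) l) :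
    GreedySeq w (edgeApproval G) l.reduceOption := by
  induction h with
  | nil => exact .nil
  | snoc l c _ hc hmax ih =>
    change ∀ c' ∉ l, marginalGain w _ l.toFinset c' ≤ marginalGain w _ l.toFinset c at hmax
    cases c with
    | none => simpa [List.reduceOption_append] using ih
    | some e =>
      rw [List.reduceOption_append, List.reduceOption_singleton, Option.toList_some]
      refine .snoc _ e ih (by rwa [List.reduceOption_mem_iff]) fun e' he' => ?_
      change marginalGain w _ _ e' ≤ marginalGain w _ _ e
      rw [List.toFinset_reduceOption, ← marginalGain_edgeApprovalP_some,
        ← marginalGain_edgeApprovalP_some]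
      by_cases hn : none ∈ l
      · exact hmax (some e') (by rwa [← List.reduceOption_mem_iff])
      · calc marginalGain w (edgeApprovalP G) l.toFinset (some e')
            ≤ 2 := marginalGain_edgeApprovalP_le_two hw0 hw1 hconc
              (by simpa [List.reduceOption_mem_iff] using he')
          _ = marginalGain w (edgeApprovalP G) l.toFinset none :=
            (marginalGain_edgeApprovalP_none hw0 hw1 (by simpa using hn)).symm
          _ ≤ _ := hmax none hn

theorem GreedySeq.isMatchingFinset_eraseNone (hw0 : w 0 = 0) (hw1 : w 1 = 1)
    (hconc : ∀ i : ℕ, 1 ≤ i → w i - w (i - 1) ≥ w (i + 1) - w i) (hw2 : w 2 < 2)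
    {l : List (Option G.edgeFinset)} (h : GreedySeq w (edgeApprovalP G) l) (hn : none ∉ l) :
    IsMatchingFinset G l.toFinset.eraseNone := by
  induction h with
  | nil => simp [IsMatchingFinset]
  | snoc l c _ hc hmax ih =>
    change ∀ c' ∉ l, marginalGain w _ l.toFinset c' ≤ marginalGain w _ l.toFinset c at hmax
    have hn' : none ∉ l := fun h => hn (List.mem_append_left _ h)
    obtain ⟨e, rfl⟩ : ∃ e, c = some e :=
      Option.ne_none_iff_exists'.1 fun h => hn (by simp [h])
    have he : e ∉ l.toFinset.eraseNone := by simpa using hc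
    have hgain : marginalGain w (edgeApproval G) l.toFinset.eraseNone e = 2 := by
      rw [← marginalGain_edgeApprovalP_some]
      refine le_antisymm (marginalGain_edgeApprovalP_le_two hw0 hw1 hconc (by simpa using hc)) ?_
      rw [← marginalGain_edgeApprovalP_none hw0 hw1 (S := l.toFinset) (by simpa using hn')]
      exact hmax none hn'
    have hT : (l ++ [some e]).toFinset.eraseNone = insert e l.toFinset.eraseNone := by
      ext
      simp
    rw [hT, isMatchingFinset_insert he]
    exact ⟨ih hn', (marginalGain_edgeApproval_eq_two_iff hw0 hw1 hconc hw2 he).1 hgain⟩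

theorem greedySeq_edgeApprovalP_map_some (hw0 : w 0 = 0) (hw1 : w 1 = 1)
    (hconc : ∀ i : ℕ, 1 ≤ i → w i - w (i - 1) ≥ w (i + 1) - w i) (hw2 : w 2 < 2)
    {m : List G.edgeFinset} (hm : m.Nodup) (hM : IsMatchingFinset G m.toFinset) :
    GreedySeq w (edgeApprovalP G) (m.map some) := by
  induction m using List.reverseRecOn with
  | nil => exact .nil
  | append_singleton m e ih =>
    obtain ⟨hm, -, he⟩ := List.nodup_append.1 hm
    replace he : e ∉ m := fun h => he e h e (List.mem_singleton_self e) rfl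
    have hT : (m ++ [e]).toFinset = insert e m.toFinset := by
      ext
      simp
    rw [hT, isMatchingFinset_insert (by simpa using he)] at hM
    rw [List.map_append]
    refine .snoc _ _ (ih hm hM.1) (by simpa using he) fun c' hc' => ?_
    change marginalGain w _ _ c' ≤ marginalGain w _ _ (some e)
    have hS : (m.map some).toFinset.eraseNone = m.toFinset := by
      ext
      simp
    rw [marginalGain_edgeApprovalP_some, hS,
      (marginalGain_edgeApproval_eq_two_iff hw0 hw1 hconc hw2 (by simpa using he)).2 hM.2]
    exact marginalGain_edgeApprovalP_le_two hw0 hw1 hconc (by rwa [List.mem_toFinset])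

theorem GreedySeq.none_cons_map_some (hw0 : w 0 = 0) (hw1 : w 1 = 1)
    (hconc : ∀ i : ℕ, 1 ≤ i → w i - w (i - 1) ≥ w (i + 1) - w i)
    {m : List G.edgeFinset} (h : GreedySeq w (edgeApproval G) m) :
    GreedySeq w (edgeApprovalP G) (none :: m.map some) := by
  induction h with
  | nil =>
    refine .snoc [] none .nil List.not_mem_nil fun c' hc' => ?_
    change marginalGain w _ _ c' ≤ marginalGain w _ _ none
    rw [marginalGain_edgeApprovalP_none hw0 hw1 (by simp)]
    exact marginalGain_edgeApprovalP_le_two hw0 hw1 hconc (by simp)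
  | snoc m e _ he hmax ih =>
    rw [List.map_append, ← List.cons_append]
    refine .snoc _ _ ih (by simpa using he) fun c' hc' => ?_
    change marginalGain w _ _ c' ≤ marginalGain w _ _ (some e)
    obtain ⟨e', rfl⟩ : ∃ e', c' = some e' :=
      Option.ne_none_iff_exists'.1 fun h => hc' (by simp [h])
    have hT : (none :: m.map some).toFinset.eraseNone = m.toFinset := by
      ext
      simp
    rw [marginalGain_edgeApprovalP_some, marginalGain_edgeApprovalP_some, hT]
    exact hmax e' (by simpa using hc')

theorem mem_greedyRule_edgeApprovalP_and_none_notMem_iff (hw0 : w 0 = 0) (hw1 : w 1 = 1)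
    (hconc : ∀ i : ℕ, 1 ≤ i → w i - w (i - 1) ≥ w (i + 1) - w i) (hw2 : w 2 < 2) (k : ℕ)
    (S : Finset (Option G.edgeFinset)) :
    (S ∈ GreedyRule w (edgeApprovalP G) k ∧ none ∉ S) ↔
      ∃ M : Finset G.edgeFinset, #M = k ∧ IsMatchingFinset G M ∧
        S = M.map Function.Embedding.some := by
  constructor
  · rintro ⟨⟨l, hl, rfl, rfl⟩, hn⟩
    refine ⟨l.toFinset.eraseNone, ?_,
      hl.isMatchingFinset_eraseNone hw0 hw1 hconc hw2 (by simpa using hn), ?_⟩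
    · rw [card_eraseNone_of_not_mem hn, List.toFinset_card_of_nodup hl.nodup]
    · rw [map_some_eraseNone, erase_eq_of_notMem hn]
  · rintro ⟨M, rfl, hM, rfl⟩
    refine ⟨⟨M.toList.map some, greedySeq_edgeApprovalP_map_some hw0 hw1 hconc hw2
      M.nodup_toList (by simpa using hM), by simp, ?_⟩, by simp⟩
    ext x
    cases x <;> simp

theorem mem_greedyRule_edgeApprovalP_and_none_mem_iff (hw0 : w 0 = 0) (hw1 : w 1 = 1)
    (hconc : ∀ i : ℕ, 1 ≤ i → w i - w (i - 1) ≥ w (i + 1) - w i) {k : ℕ} (hk : 1 ≤ k)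
    (S : Finset (Option G.edgeFinset)) :
    (S ∈ GreedyRule w (edgeApprovalP G) k ∧ none ∈ S) ↔
      ∃ M ∈ GreedyRule w (edgeApproval G) (k - 1),
        S = insert none (M.map Function.Embedding.some) := by
  constructor
  · rintro ⟨⟨l, hl, rfl, rfl⟩, hn⟩
    have hred := hl.reduceOption_of_edgeApprovalP hw0 hw1 hconc
    refine ⟨_, ⟨l.reduceOption, hred, ?_, List.toFinset_reduceOption l⟩, ?_⟩
    · rw [← List.toFinset_card_of_nodup hred.nodup, List.toFinset_reduceOption,
        card_eraseNone_of_mem hn, List.toFinset_card_of_nodup hl.nodup]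
    · rw [map_some_eraseNone, insert_erase hn]
  · rintro ⟨_, ⟨m, hm, hlen, rfl⟩, rfl⟩
    refine ⟨⟨none :: m.map some, hm.none_cons_map_some hw0 hw1 hconc, ?_, ?_⟩, by simp⟩
    · simp only [List.length_cons, List.length_map, hlen]
      omega
    · ext x
      cases x <;> simp

end AugmentedElection

theorem Nat.card_eq_add_of_none_notMem_iff_of_none_mem_iff {β : Type} [Finite β]
    [DecidableEq β] {X : Set (Finset (Option β))} {P Q : Set (Finset β)}
    (hP : ∀ S, S ∈ X ∧ none ∉ S ↔ ∃ M ∈ P, S = M.map Function.Embedding.some)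
    (hQ : ∀ S, S ∈ X ∧ none ∈ S ↔
      ∃ M ∈ Q, S = insert none (M.map Function.Embedding.some)) :
    Nat.card X = Nat.card P + Nat.card Q := by
  have hX : X = map Function.Embedding.some '' P ∪
      (fun M => insert none (M.map Function.Embedding.some)) '' Q := by
    ext S
    rw [show S ∈ X ↔ (S ∈ X ∧ none ∉ S) ∨ (S ∈ X ∧ none ∈ S) by tauto, hP, hQ]
    simp only [Set.mem_union, Set.mem_image, eq_comm]
  have hdisj : Disjoint (map Function.Embedding.some '' P)
      ((fun M => insert none (M.map Function.Embedding.some)) '' Q) := by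
    refine Set.disjoint_left.2 ?_
    rintro _ ⟨M, -, rfl⟩ ⟨M', -, h⟩
    simpa using congrArg (none ∈ ·) h
  have hinj : Function.Injective fun M : Finset β => insert none (M.map Function.Embedding.some) :=
    fun M M' h => ext fun a => by simpa using congrArg (some a ∈ ·) h
  rw [Nat.card_coe_set_eq, Nat.card_coe_set_eq, Nat.card_coe_set_eq, hX,
    Set.ncard_union_eq hdisj, Set.ncard_image_of_injective _ (map_injective _),
    Set.ncard_image_of_injective _ hinj]

theorem stmt11_general {α : Type} [Fintype α] [DecidableEq α]
    (G : SimpleGraph α) [DecidableRel G.Adj]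
    (w : ℕ → ℝ) (hw0 : w 0 = 0) (hw1 : w 1 = 1)
    (hconc : ∀ i : ℕ, 1 ≤ i → w i - w (i - 1) ≥ w (i + 1) - w i)
    (hw2 : w 2 < 2) (k : ℕ) (hk : 1 ≤ k) :
    (∀ S : Finset (Option ↥G.edgeFinset),
      (S ∈ GreedyRule w (edgeApprovalP G) k ∧ none ∉ S) ↔
        (∃ M : Finset ↥G.edgeFinset, M.card = k ∧ IsMatchingFinset G M ∧
          S = M.map Function.Embedding.some))
    ∧ (∀ S : Finset (Option ↥G.edgeFinset),
        (S ∈ GreedyRule w (edgeApprovalP G) k ∧ none ∈ S) ↔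
          (∃ M ∈ GreedyRule w (edgeApproval G) (k - 1),
            S = insert none (M.map Function.Embedding.some)))
    ∧ Nat.card ↥(GreedyRule w (edgeApprovalP G) k)
        = Nat.card {M : Finset ↥G.edgeFinset // M.card = k ∧ IsMatchingFinset G M}
          + Nat.card ↥(GreedyRule w (edgeApproval G) (k - 1)) := by
  have hwithout := mem_greedyRule_edgeApprovalP_and_none_notMem_iff (G := G) hw0 hw1 hconc hw2 k
  have hwith := mem_greedyRule_edgeApprovalP_and_none_mem_iff (G := G) hw0 hw1 hconc hk
  refine ⟨hwithout, hwith, Nat.card_eq_add_of_none_notMem_iff_of_none_mem_iff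
    (P := {M | M.card = k ∧ IsMatchingFinset G M}) (fun S => (hwithout S).trans ?_) hwith⟩
  simp only [Set.mem_ofPred_eq, and_assoc]

theorem stmt11 {α : Type} [Fintype α] [DecidableEq α]
    (G : SimpleGraph α) [DecidableRel G.Adj]
    (w : ℕ → ℝ) (hw0 : w 0 = 0) (hw1 : w 1 = 1) (hmono : Monotone w)
    (hconc : ∀ i : ℕ, 1 ≤ i → w i - w (i - 1) ≥ w (i + 1) - w i)
    (hw2 : w 2 < 2) (k : ℕ) (hk : 1 ≤ k) :
    (∀ S : Finset (Option ↥G.edgeFinset),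
      (S ∈ GreedyRule w (edgeApprovalP G) k ∧ none ∉ S) ↔
        (∃ M : Finset ↥G.edgeFinset, M.card = k ∧ IsMatchingFinset G M ∧
          S = M.map Function.Embedding.some))
    ∧ (∀ S : Finset (Option ↥G.edgeFinset),
        (S ∈ GreedyRule w (edgeApprovalP G) k ∧ none ∈ S) ↔
          (∃ M ∈ GreedyRule w (edgeApproval G) (k - 1),
            S = insert none (M.map Function.Embedding.some)))
    ∧ Nat.card ↥(GreedyRule w (edgeApprovalP G) k)
        = Nat.card {M : Finset ↥G.edgeFinset // M.card = k ∧ IsMatchingFinset G M}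
          + Nat.card ↥(GreedyRule w (edgeApproval G) (k - 1)) :=
  stmt11_general G w hw0 hw1 hconc hw2 k hk
end

section
/- Let G be a finite simple graph, k ≥ 1, and let E = E(G) be the edge election of G and E_p be E with one additional candidate p and two additional voters each approving only p. Then: (i) the committees in Phragmén(E_p, k) that do not contain p are exactly the size-k matchings of G; (ii) the committees in Phragmén(E_p, k) that contain p are exactly the sets M ∪ {p} with M ∈ Phragmén(E, k−1); consequently (iii) |Phragmén(E_p, k)| equals the number of size-k matchings of G plus |Phragmén(E, k−1)|. -/
open Finset

/-- The voters approving candidate `c`. -/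
def approvers {C V : Type} [DecidableEq C] [Fintype V]
    (A : V → Finset C) (c : C) : Finset V :=
  Finset.univ.filter (fun v => c ∈ A v)

/-- Given current budgets `b`, the amount of time needed until the voters approving `c`
jointly hold one unit of currency (each voter earns money at a constant unit rate). -/
noncomputable def phCost {C V : Type} [DecidableEq C] [Fintype V]
    (A : V → Finset C) (b : V → ℝ) (c : C) : ℝ :=
  max 0 ((1 - ∑ v ∈ approvers A c, b v) / (approvers A c).card)

/-- Reachable states of the Phragmén sequential process started from committee `S₀` and
budgets `b₀`: repeatedly, a not-yet-selected candidate whose supporters can afford it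
soonest is bought (ties resolved arbitrarily — parallel universes); its supporters'
budgets reset to `0` while all other voters keep earning until the purchase moment. -/
inductive PhragReach {C V : Type} [DecidableEq C] [Fintype V]
    (A : V → Finset C) (S₀ : Finset C) (b₀ : V → ℝ) : Finset C → (V → ℝ) → Prop
  | init : PhragReach A S₀ b₀ S₀ b₀
  | step (S : Finset C) (b : V → ℝ) (c : C) :
      PhragReach A S₀ b₀ S b → c ∉ S → (approvers A c).Nonempty →
      (∀ c' : C, c' ∉ S → (approvers A c').Nonempty → phCost A b c ≤ phCost A b c') →
      PhragReach A S₀ b₀ (insert c S)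
        (fun v => if c ∈ A v then 0 else b v + phCost A b c)

/-- The size-`k` committees selected by the Phragmén rule (parallel-universes
tie-breaking), starting from the empty committee and zero budgets. -/
def Phragmen {C V : Type} [DecidableEq C] [Fintype V]
    (A : V → Finset C) (k : ℕ) : Set (Finset C) :=
  {S | ∃ b : V → ℝ, PhragReach A ∅ (fun _ => 0) S b ∧ S.card = k}

/-!
Every candidate of `E` and of `E_p` has exactly two supporters, so at time `1/2` all candidates
become affordable together; starting from budgets `1/2` instead of `0` therefore only shifts time.
From there a candidate none of whose supporters has paid yet costs nothing. While `p` is unbought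
it is such a candidate, so every purchase is free and the committee grows as a matching. Once `p`
is bought its two supporters never matter again, and the vertex budgets evolve exactly as in a
run of `E` started from budgets `1/2`.
-/

section Phragmen

variable {C V : Type} [DecidableEq C] [Fintype V]

noncomputable def phBuy (A : V → Finset C) (b : V → ℝ) (c : C) : V → ℝ :=
  fun v => if c ∈ A v then 0 else b v + phCost A b c

def IsPhCheapest (A : V → Finset C) (S : Finset C) (b : V → ℝ) (c : C) : Prop :=
  c ∉ S ∧ (approvers A c).Nonempty ∧
    ∀ c', c' ∉ S → (approvers A c').Nonempty → phCost A b c ≤ phCost A b c'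

variable {A : V → Finset C} {S₀ S M : Finset C} {b₀ b : V → ℝ} {c : C} {n : ℕ}

theorem PhragReach.buy (h : PhragReach A S₀ b₀ S b) (hc : IsPhCheapest A S b c) :
    PhragReach A S₀ b₀ (insert c S) (phBuy A b c) :=
  .step S b c h hc.1 hc.2.1 hc.2.2

@[simp]
theorem mem_approvers {v : V} : v ∈ approvers A c ↔ c ∈ A v := by
  simp [approvers]

theorem phCost_nonneg (b : V → ℝ) (c : C) : 0 ≤ phCost A b c :=
  le_max_left _ _

theorem isPhCheapest_of_phCost_eq_zero (hcS : c ∉ S) (hne : (approvers A c).Nonempty)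
    (h0 : phCost A b c = 0) : IsPhCheapest A S b c :=
  ⟨hcS, hne, fun c' _ _ => h0 ▸ phCost_nonneg b c'⟩

theorem PhragReach.eq_start_or_of_firstStep {b₀' : V → ℝ}
    (hcheap : ∀ c, IsPhCheapest A S₀ b₀ c → IsPhCheapest A S₀ b₀' c)
    (hbuy : ∀ c, IsPhCheapest A S₀ b₀ c → phBuy A b₀ c = phBuy A b₀' c)
    (h : PhragReach A S₀ b₀ S b) : (S = S₀ ∧ b = b₀) ∨ PhragReach A S₀ b₀' S b := by
  induction h with
  | init => exact .inl ⟨rfl, rfl⟩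
  | step S b c _ hcS hne hmin ih =>
    have hc : IsPhCheapest A S b c := ⟨hcS, hne, hmin⟩
    right
    rcases ih with ⟨rfl, rfl⟩ | h
    · have h' := PhragReach.init.buy (hcheap c hc)
      rwa [← hbuy c hc] at h'
    · exact h.buy hc

theorem phCost_const (hc : (approvers A c).card = n) (hn : 0 < n) (t : ℝ) :
    phCost A (fun _ => t) c = max 0 ((n : ℝ)⁻¹ - t) := by
  have hn' : (n : ℝ) ≠ 0 := by positivity
  rw [phCost, sum_const, hc, nsmul_eq_mul]
  congr 1
  field_simp

theorem approvers_nonempty_of_card (hc : (approvers A c).card = n) (hn : 0 < n) :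
    (approvers A c).Nonempty :=
  card_pos.1 (hc ▸ hn)

theorem isPhCheapest_const_iff (hA : ∀ c, (approvers A c).card = n) (hn : 0 < n) (t : ℝ) :
    IsPhCheapest A S (fun _ => t) c ↔ c ∉ S := by
  refine ⟨And.left, fun hcS =>
    ⟨hcS, approvers_nonempty_of_card (hA c) hn, fun c' _ _ => ?_⟩⟩
  rw [phCost_const (hA c) hn, phCost_const (hA c') hn]

theorem exists_phragReach_zero_iff (hA : ∀ c, (approvers A c).card = n) (hn : 0 < n) :
    (∃ b, PhragReach A S₀ (fun _ => 0) S b) ↔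
      ∃ b, PhragReach A S₀ (fun _ => (n : ℝ)⁻¹) S b := by
  have hbuy (c : C) : phBuy A (fun _ => 0) c = phBuy A (fun _ => (n : ℝ)⁻¹) c := by
    funext v
    simp [phBuy, phCost_const (hA c) hn]
  constructor <;> rintro ⟨b, h⟩
  · rcases h.eq_start_or_of_firstStep (by simp [isPhCheapest_const_iff hA hn])
      (fun c _ => hbuy c) with ⟨rfl, -⟩ | h
    exacts [⟨_, .init⟩, ⟨b, h⟩]
  · rcases h.eq_start_or_of_firstStep (by simp [isPhCheapest_const_iff hA hn])
      (fun c _ => (hbuy c).symm) with ⟨rfl, -⟩ | h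
    exacts [⟨_, .init⟩, ⟨b, h⟩]

theorem mem_phragmen_iff (hA : ∀ c, (approvers A c).card = n) (hn : 0 < n) {k : ℕ} :
    S ∈ Phragmen A k ↔
      (∃ b, PhragReach A ∅ (fun _ => (n : ℝ)⁻¹) S b) ∧ S.card = k := by
  rw [← exists_phragReach_zero_iff hA hn]
  simp [Phragmen]

/-- The budgets at time `1 / n` after buying the candidates of `M`, each at cost zero. -/
noncomputable def coverBudget (A : V → Finset C) (n : ℕ) (M : Finset C) : V → ℝ :=
  fun v => if Disjoint (A v) M then (n : ℝ)⁻¹ else 0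

theorem phCost_coverBudget_eq_zero_iff (hc : (approvers A c).card = n) (hn : 0 < n) :
    phCost A (coverBudget A n M) c = 0 ↔
      ∀ c' ∈ M, Disjoint (approvers A c) (approvers A c') := by
  have hn' : (0 : ℝ) < n := by exact_mod_cast hn
  have hle : ∀ v ∈ approvers A c, coverBudget A n M v ≤ (n : ℝ)⁻¹ := fun v _ => by
    unfold coverBudget; split_ifs
    exacts [le_rfl, by positivity]
  have hsum : ∑ _v ∈ approvers A c, (n : ℝ)⁻¹ = 1 := by
    rw [sum_const, hc, nsmul_eq_mul, mul_inv_cancel₀ hn'.ne']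
  calc phCost A (coverBudget A n M) c = 0
      ↔ 1 ≤ ∑ v ∈ approvers A c, coverBudget A n M v := by
        rw [phCost, hc, max_eq_left_iff, div_nonpos_iff]
        constructor
        · rintro (⟨-, h⟩ | ⟨h, -⟩) <;> linarith
        · intro h; exact .inr ⟨by linarith, hn'.le⟩
    _ ↔ ∀ v ∈ approvers A c, coverBudget A n M v = (n : ℝ)⁻¹ := by
        rw [← sum_eq_sum_iff_of_le hle, hsum]
        exact ⟨fun h => le_antisymm (hsum ▸ sum_le_sum hle) h, fun h => h.ge⟩
    _ ↔ ∀ c' ∈ M, Disjoint (approvers A c) (approvers A c') := by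
        have hcover (v : V) : coverBudget A n M v = (n : ℝ)⁻¹ ↔ Disjoint (A v) M := by
          by_cases h : Disjoint (A v) M <;> simp [coverBudget, h, hn'.ne]
        simp only [hcover, disjoint_left, mem_approvers]
        exact ⟨fun h c' hc' v hv hv' => h v hv hv' hc',
          fun h v hv c' hv' hc' => h c' hc' hv hv'⟩

theorem phBuy_coverBudget (h0 : phCost A (coverBudget A n M) c = 0) :
    phBuy A (coverBudget A n M) c = coverBudget A n (insert c M) := by
  funext v
  by_cases hv : c ∈ A v <;> simp [phBuy, coverBudget, hv, h0, disjoint_insert_right]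

theorem phragReach_coverBudget (hA : ∀ c, (approvers A c).card = n) (hn : 0 < n)
    (hM : (M : Set C).PairwiseDisjoint (approvers A)) :
    PhragReach A ∅ (fun _ => (n : ℝ)⁻¹) M (coverBudget A n M) := by
  induction M using Finset.induction_on with
  | empty =>
    have h_empty : coverBudget A n ∅ = fun _ => (n : ℝ)⁻¹ := by
      funext v
      simp [coverBudget]
    rw [h_empty]
    exact .init
  | insert c M hcM ih =>
    rw [coe_insert, Set.pairwiseDisjoint_insert_of_notMem (by simpa)] at hM
    have h0 := (phCost_coverBudget_eq_zero_iff (hA c) hn).2 hM.2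
    rw [← phBuy_coverBudget h0]
    exact (ih hM.1).buy
      (isPhCheapest_of_phCost_eq_zero hcM (approvers_nonempty_of_card (hA c) hn) h0)

end Phragmen

section EdgeElection

variable {α : Type} [Fintype α] [DecidableEq α] (G : SimpleGraph α) [DecidableRel G.Adj]

@[simp]
theorem edgeApprovalP_inl (v : α) : edgeApprovalP G (.inl v) = (edgeApproval G v).map .some :=
  rfl

@[simp]
theorem edgeApprovalP_inr (i : Fin 2) : edgeApprovalP G (.inr i) = {none} :=
  rfl

theorem approvers_edgeApproval (e : G.edgeFinset) :
    approvers (edgeApproval G) e = (e : Sym2 α).toFinset := by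
  ext v
  simp [edgeApproval]

theorem card_approvers_edgeApproval (e : G.edgeFinset) :
    (approvers (edgeApproval G) e).card = 2 := by
  rw [approvers_edgeApproval]
  exact G.card_toFinset_mem_edgeFinset e

theorem isMatchingFinset_iff_pairwiseDisjoint {M : Finset G.edgeFinset} :
    IsMatchingFinset G M ↔
      (M : Set G.edgeFinset).PairwiseDisjoint (approvers (edgeApproval G)) := by
  simp [IsMatchingFinset, Set.PairwiseDisjoint, Set.Pairwise, Function.onFun,
    approvers_edgeApproval, disjoint_left]

theorem approvers_edgeApprovalP_some (e : G.edgeFinset) :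
    approvers (edgeApprovalP G) (some e) = (approvers (edgeApproval G) e).map .inl := by
  ext (v | i) <;> simp

theorem approvers_edgeApprovalP_none :
    approvers (edgeApprovalP G) none = univ.map .inr := by
  ext (v | i) <;> simp

theorem card_approvers_edgeApprovalP (c : Option G.edgeFinset) :
    (approvers (edgeApprovalP G) c).card = 2 := by
  cases c with
  | none => simp [approvers_edgeApprovalP_none]
  | some e => rw [approvers_edgeApprovalP_some, card_map, card_approvers_edgeApproval]

theorem approvers_edgeApproval_nonempty (e : G.edgeFinset) :
    (approvers (edgeApproval G) e).Nonempty :=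
  approvers_nonempty_of_card (card_approvers_edgeApproval G e) two_pos

theorem approvers_edgeApprovalP_nonempty (c : Option G.edgeFinset) :
    (approvers (edgeApprovalP G) c).Nonempty :=
  approvers_nonempty_of_card (card_approvers_edgeApprovalP G c) two_pos

theorem pairwiseDisjoint_map_some_iff {M : Finset G.edgeFinset} :
    ((M.map .some : Finset _) : Set (Option G.edgeFinset)).PairwiseDisjoint
        (approvers (edgeApprovalP G)) ↔
      (M : Set G.edgeFinset).PairwiseDisjoint (approvers (edgeApproval G)) := by
  rw [coe_map, Set.InjOn.pairwiseDisjoint_image (Function.Embedding.injective _).injOn]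
  simp [Set.PairwiseDisjoint, Set.Pairwise, Function.onFun, approvers_edgeApprovalP_some]

theorem phCost_edgeApprovalP_some (b : α ⊕ Fin 2 → ℝ) (e : G.edgeFinset) :
    phCost (edgeApprovalP G) b (some e) = phCost (edgeApproval G) (b ∘ Sum.inl) e := by
  rw [phCost, phCost, approvers_edgeApprovalP_some, sum_map, card_map]
  rfl

theorem phBuy_edgeApprovalP_some_comp_inl (b : α ⊕ Fin 2 → ℝ) (e : G.edgeFinset) :
    phBuy (edgeApprovalP G) b (some e) ∘ Sum.inl = phBuy (edgeApproval G) (b ∘ Sum.inl) e := by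
  funext v
  simp [phBuy, phCost_edgeApprovalP_some]

theorem phCost_edgeApprovalP_none_coverBudget (M : Finset G.edgeFinset) :
    phCost (edgeApprovalP G) (coverBudget (edgeApprovalP G) 2 (M.map .some)) none = 0 := by
  refine (phCost_coverBudget_eq_zero_iff (card_approvers_edgeApprovalP G none) two_pos).2 ?_
  intro c' hc'
  obtain ⟨e, -, rfl⟩ := mem_map.1 hc'
  simp [approvers_edgeApprovalP_none, approvers_edgeApprovalP_some, disjoint_left]

theorem phragReach_edgeApprovalP_cases {S : Finset (Option G.edgeFinset)} {b : α ⊕ Fin 2 → ℝ}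
    (h : PhragReach (edgeApprovalP G) ∅ (fun _ => ((2 : ℕ) : ℝ)⁻¹) S b) :
    (∃ M : Finset G.edgeFinset, IsMatchingFinset G M ∧ S = M.map .some ∧
        b = coverBudget (edgeApprovalP G) 2 S) ∨
      ∃ M : Finset G.edgeFinset, S = insert none (M.map .some) ∧
        PhragReach (edgeApproval G) ∅ (fun _ => ((2 : ℕ) : ℝ)⁻¹) M (b ∘ Sum.inl) := by
  induction h with
  | init =>
    refine .inl ⟨∅, by simp [IsMatchingFinset], rfl, ?_⟩
    funext v
    simp [coverBudget]
  | step S b c _ hcS hne hmin ih =>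
    rcases ih with ⟨M, hM, rfl, rfl⟩ | ⟨M, rfl, hM⟩
    · have hM' :=
        (pairwiseDisjoint_map_some_iff G).2 ((isMatchingFinset_iff_pairwiseDisjoint G).1 hM)
      have hc0 : phCost (edgeApprovalP G) (coverBudget (edgeApprovalP G) 2 (M.map .some)) c = 0 :=
        le_antisymm (phCost_edgeApprovalP_none_coverBudget G M ▸
          hmin none (by simp) (approvers_edgeApprovalP_nonempty G _)) (phCost_nonneg _ _)
      cases c with
      | none =>
        refine .inr ⟨M, rfl, ?_⟩
        have hbudget : phBuy (edgeApprovalP G) (coverBudget (edgeApprovalP G) 2 (M.map .some)) none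
            ∘ Sum.inl = coverBudget (edgeApproval G) 2 M := by
          funext v
          simp [phBuy, hc0, coverBudget, disjoint_map]
        exact hbudget ▸ phragReach_coverBudget (card_approvers_edgeApproval G) two_pos
          ((isMatchingFinset_iff_pairwiseDisjoint G).1 hM)
      | some e =>
        have hinsert : insert (some e) (M.map .some) = (insert e M).map .some := by
          simp [map_insert]
        refine .inl ⟨insert e M, ?_, hinsert, hinsert ▸ phBuy_coverBudget hc0⟩
        rw [isMatchingFinset_iff_pairwiseDisjoint, ← pairwiseDisjoint_map_some_iff, ← hinsert,
          coe_insert]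
        exact hM'.insert_of_notMem hcS
          ((phCost_coverBudget_eq_zero_iff (card_approvers_edgeApprovalP G _) two_pos).1 hc0)
    · obtain ⟨e, rfl⟩ : ∃ e, c = some e :=
        Option.ne_none_iff_exists'.1 (by rintro rfl; simp at hcS)
      refine .inr ⟨insert e M, by simp [map_insert, insert_comm], ?_⟩
      show PhragReach _ _ _ _ (phBuy (edgeApprovalP G) b (some e) ∘ Sum.inl)
      rw [phBuy_edgeApprovalP_some_comp_inl]
      refine hM.buy ⟨by simpa using hcS,
        approvers_edgeApproval_nonempty G e, fun e' he' _ => ?_⟩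
      simpa [phCost_edgeApprovalP_some] using hmin (some e') (by simpa using he')
        (approvers_edgeApprovalP_nonempty G _)

theorem exists_phragReach_edgeApprovalP_of_phragReach {M : Finset G.edgeFinset} {bE : α → ℝ}
    (h : PhragReach (edgeApproval G) ∅ (fun _ => ((2 : ℕ) : ℝ)⁻¹) M bE) :
    ∃ b, b ∘ Sum.inl = bE ∧
      PhragReach (edgeApprovalP G) ∅ (fun _ => ((2 : ℕ) : ℝ)⁻¹)
        (insert none (M.map .some)) b := by
  induction h with
  | init =>
    have h0 : phCost (edgeApprovalP G) (fun _ => ((2 : ℕ) : ℝ)⁻¹) none = 0 := by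
      simp [phCost_const (card_approvers_edgeApprovalP G none) two_pos]
    refine ⟨_, ?_, PhragReach.init.buy (isPhCheapest_of_phCost_eq_zero (notMem_empty _)
      (approvers_edgeApprovalP_nonempty G _) h0)⟩
    funext v
    simp only [Function.comp_apply, phBuy, h0, add_zero]
    simp
  | step S bE e _ heS hne hmin ih =>
    obtain ⟨b, rfl, hb⟩ := ih
    refine ⟨_, phBuy_edgeApprovalP_some_comp_inl G b e, ?_⟩
    rw [map_insert, insert_comm, Function.Embedding.some_apply]
    refine hb.buy ⟨by simpa using heS,
      approvers_edgeApprovalP_nonempty G _, fun c' hc' _ => ?_⟩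
    cases c' with
    | none => simp at hc'
    | some e' =>
      rw [phCost_edgeApprovalP_some, phCost_edgeApprovalP_some]
      exact hmin e' (by simpa using hc')
        (approvers_edgeApproval_nonempty G e')

theorem mem_phragmen_edgeApprovalP_and_none_notMem_iff (k : ℕ)
    (S : Finset (Option G.edgeFinset)) :
    (S ∈ Phragmen (edgeApprovalP G) k ∧ none ∉ S) ↔
      ∃ M : Finset G.edgeFinset, M.card = k ∧ IsMatchingFinset G M ∧ S = M.map .some := by
  rw [mem_phragmen_iff (card_approvers_edgeApprovalP G) two_pos]
  constructor
  · rintro ⟨⟨⟨b, hb⟩, rfl⟩, hnone⟩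
    rcases phragReach_edgeApprovalP_cases G hb with ⟨M, hM, rfl, -⟩ | ⟨M, rfl, -⟩
    · exact ⟨M, (card_map _).symm, hM, rfl⟩
    · simp at hnone
  · rintro ⟨M, rfl, hM, rfl⟩
    refine ⟨⟨⟨_, phragReach_coverBudget (card_approvers_edgeApprovalP G) two_pos
      ((pairwiseDisjoint_map_some_iff G).2 ((isMatchingFinset_iff_pairwiseDisjoint G).1 hM))⟩,
      card_map _⟩, by simp⟩

theorem mem_phragmen_edgeApprovalP_and_none_mem_iff {k : ℕ} (hk : 1 ≤ k)
    (S : Finset (Option G.edgeFinset)) :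
    (S ∈ Phragmen (edgeApprovalP G) k ∧ none ∈ S) ↔
      ∃ M ∈ Phragmen (edgeApproval G) (k - 1), S = insert none (M.map .some) := by
  rw [mem_phragmen_iff (card_approvers_edgeApprovalP G) two_pos]
  simp_rw [mem_phragmen_iff (card_approvers_edgeApproval G) two_pos]
  constructor
  · rintro ⟨⟨⟨b, hb⟩, hcard⟩, hnone⟩
    rcases phragReach_edgeApprovalP_cases G hb with ⟨M, -, rfl, -⟩ | ⟨M, rfl, hM⟩
    · simp at hnone
    · rw [card_insert_of_notMem (by simp), card_map] at hcard
      exact ⟨M, ⟨⟨_, hM⟩, by omega⟩, rfl⟩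
  · rintro ⟨M, ⟨⟨bE, hbE⟩, hcard⟩, rfl⟩
    obtain ⟨b, -, hb⟩ := exists_phragReach_edgeApprovalP_of_phragReach G hbE
    refine ⟨⟨⟨b, hb⟩, ?_⟩, mem_insert_self _ _⟩
    rw [card_insert_of_notMem (by simp), card_map]
    omega

end EdgeElection

theorem stmt14 {α : Type} [Fintype α] [DecidableEq α]
    (G : SimpleGraph α) [DecidableRel G.Adj] (k : ℕ) (hk : 1 ≤ k) :
    (∀ S : Finset (Option ↥G.edgeFinset),
      (S ∈ Phragmen (edgeApprovalP G) k ∧ none ∉ S) ↔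
        (∃ M : Finset ↥G.edgeFinset, M.card = k ∧ IsMatchingFinset G M ∧
          S = M.map Function.Embedding.some))
    ∧ (∀ S : Finset (Option ↥G.edgeFinset),
        (S ∈ Phragmen (edgeApprovalP G) k ∧ none ∈ S) ↔
          (∃ M ∈ Phragmen (edgeApproval G) (k - 1),
            S = insert none (M.map Function.Embedding.some)))
    ∧ Nat.card ↥(Phragmen (edgeApprovalP G) k)
        = Nat.card {M : Finset ↥G.edgeFinset // M.card = k ∧ IsMatchingFinset G M}
          + Nat.card ↥(Phragmen (edgeApproval G) (k - 1)) := by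
  have h_notMem := mem_phragmen_edgeApprovalP_and_none_notMem_iff G k
  have h_mem := mem_phragmen_edgeApprovalP_and_none_mem_iff G hk
  refine ⟨h_notMem, h_mem, ?_⟩
  have h_diff : Phragmen (edgeApprovalP G) k \ {S | none ∈ S}
      = (·.map .some) '' {M | M.card = k ∧ IsMatchingFinset G M} := by
    ext S
    simpa [and_assoc, eq_comm] using h_notMem S
  have h_inter : Phragmen (edgeApprovalP G) k ∩ {S | none ∈ S}
      = (fun M => insert none (M.map .some)) '' Phragmen (edgeApproval G) (k - 1) := by
    ext S
    simpa [eq_comm] using h_mem S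
  have h_inj : Function.Injective fun M : Finset G.edgeFinset => insert none (M.map .some) :=
    fun M N h => by
      ext e
      simpa using congrArg (some e ∈ ·) h
  rw [Nat.card_coe_set_eq, ← Set.ncard_inter_add_ncard_sdiff_eq_ncard _ {S | none ∈ S},
    h_inter, h_diff, Set.ncard_image_of_injective _ h_inj,
    Set.ncard_image_of_injective _ (map_injective _), add_comm]
  rfl
end

section
/- Let E = (C, V) be an approval election, let 1 ≤ k ≤ |C|, and let N be a natural number such that k · max_{c ∈ C} |{v ∈ V : c ∈ A(v)}| < |V| + N. Let E_N be the election obtained from E by adding N voters with empty approval sets. Then Phase 1 of the Method of Equal Shares on (E_N, k) selects no candidates, and the set of winning committees of the full Method of Equal Shares on (E_N, k) equals Phragmén(E, k). -/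
open Finset

/-- Reachable states of Phase 1 of the Method of Equal Shares started from budgets `b₀`:
repeatedly, a not-yet-selected candidate `c` with minimal per-voter cost `ρ`
(where `∑_{v approving c} min (b v) ρ = 1`) is selected, and each approver `v` of `c`
pays `min (b v) ρ`. Ties are resolved arbitrarily (parallel universes). -/
inductive MESReach {C V : Type} [DecidableEq C] [Fintype V]
    (A : V → Finset C) (b₀ : V → ℝ) : Finset C → (V → ℝ) → Prop
  | init : MESReach A b₀ ∅ b₀
  | step (S : Finset C) (b : V → ℝ) (c : C) (ρ : ℝ) :
      MESReach A b₀ S b → c ∉ S → 0 ≤ ρ →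
      (∑ v ∈ approvers A c, min (b v) ρ) = 1 →
      (∀ c' : C, c' ∉ S → ∀ ρ' : ℝ, 0 ≤ ρ' →
        (∑ v ∈ approvers A c', min (b v) ρ') = 1 → ρ ≤ ρ') →
      MESReach A b₀ (insert c S) (fun v => if c ∈ A v then b v - min (b v) ρ else b v)

/-- Final states of Phase 1 of MEqS with committee size `k`: the process stops as soon
as `k` candidates are selected or no unselected candidate is affordable. -/
def MESFinal {C V : Type} [DecidableEq C] [Fintype V]
    (A : V → Finset C) (k : ℕ) (S : Finset C) (b : V → ℝ) : Prop :=
  MESReach A (fun _ => (k : ℝ) / (Fintype.card V : ℝ)) S b ∧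
    (S.card = k ∨ ∀ c : C, c ∉ S → ∑ v ∈ approvers A c, b v < 1)

/-- Phase 1 of the Method of Equal Shares with parallel-universes tie-breaking:
all committees obtainable when each voter starts with budget `k/|V|`. -/
def MESPhase1 {C V : Type} [DecidableEq C] [Fintype V]
    (A : V → Finset C) (k : ℕ) : Set (Finset C) :=
  {S | ∃ b : V → ℝ, MESFinal A k S b}

/-- The full Method of Equal Shares: run Phase 1, then complete the committee to size `k`
using the Phragmén rule started with the budgets left over from Phase 1. -/
def MESFull {C V : Type} [DecidableEq C] [Fintype V]
    (A : V → Finset C) (k : ℕ) : Set (Finset C) :=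
  {W | ∃ (S : Finset C) (b b' : V → ℝ),
    MESFinal A k S b ∧ PhragReach A S b W b' ∧ W.card = k}

/-- Election `E_N`: the election `E` extended with `N` voters with empty approval sets. -/
def extApproval {C V : Type} (A : V → Finset C) (N : ℕ) : V ⊕ Fin N → Finset C
  | .inl v => A v
  | .inr _ => ∅

/-!
With `N` abstaining voters added, every voter starts Phase 1 with `β = k / (|V| + N)`, and
`k · |approvers c| < |V| + N` says that no candidate's supporters can afford it, so Phase 1 selects
nothing and leaves every budget at `β`. Phragmén started from a constant budget `β` that affords no
candidate makes the same first purchases as from zero budgets, since the waiting time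
`1 / |approvers c| - β` is minimised by the same candidates; after the first purchase the two runs
coincide, as its supporters are reset to `0` and every other voter holds `1 / |approvers c|` in both.
The abstaining voters never take part in a Phragmén purchase.
-/

section MES

variable {C V : Type} [DecidableEq C] [Fintype V] {A : V → Finset C}

theorem MESReach.eq_init_of_forall_sum_lt_one {b₀ : V → ℝ}
    (hb₀ : ∀ c, ∑ v ∈ approvers A c, b₀ v < 1) {S : Finset C} {b : V → ℝ}
    (h : MESReach A b₀ S b) : S = ∅ ∧ b = b₀ := by
  induction h with
  | init => exact ⟨rfl, rfl⟩
  | step S b c ρ _ _ _ hsum _ ih =>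
    obtain ⟨-, rfl⟩ := ih
    have : ∑ v ∈ approvers A c, min (b v) ρ ≤ ∑ v ∈ approvers A c, b v :=
      sum_le_sum fun v _ => min_le_left _ _
    linarith [hb₀ c]

variable {k : ℕ}

theorem mesFinal_iff_of_forall_sum_lt_one
    (hk : ∀ c, ∑ _v ∈ approvers A c, (k : ℝ) / Fintype.card V < 1) {S : Finset C} {b : V → ℝ} :
    MESFinal A k S b ↔ S = ∅ ∧ b = fun _ => (k : ℝ) / Fintype.card V :=
  ⟨fun h => h.1.eq_init_of_forall_sum_lt_one hk,
    by rintro ⟨rfl, rfl⟩; exact ⟨.init, .inr fun c _ => hk c⟩⟩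

theorem mesPhase1_eq_of_forall_sum_lt_one
    (hk : ∀ c, ∑ _v ∈ approvers A c, (k : ℝ) / Fintype.card V < 1) : MESPhase1 A k = {∅} := by
  ext S
  simp [MESPhase1, mesFinal_iff_of_forall_sum_lt_one hk]

theorem mesFull_eq_of_forall_sum_lt_one
    (hk : ∀ c, ∑ _v ∈ approvers A c, (k : ℝ) / Fintype.card V < 1) :
    MESFull A k =
      {W | (∃ b, PhragReach A ∅ (fun _ => (k : ℝ) / Fintype.card V) W b) ∧ W.card = k} := by
  ext W
  simp [MESFull, mesFinal_iff_of_forall_sum_lt_one hk]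

end MES

section Phragmen

variable {C V : Type} [DecidableEq C] [Fintype V] {A : V → Finset C}

theorem PhragReach.eq_init_of_eq_empty {b₀ b : V → ℝ} {S : Finset C}
    (h : PhragReach A ∅ b₀ S b) (hS : S = ∅) : b = b₀ := by
  cases h with
  | init => rfl
  | step => simp at hS

theorem add_phCost_const {β : ℝ} {c : C} (hc : (approvers A c).Nonempty)
    (hβ : β * (approvers A c).card ≤ 1) :
    β + phCost A (fun _ => β) c = 1 / (approvers A c).card := by
  have hpos : (0 : ℝ) < (approvers A c).card := by exact_mod_cast hc.card_pos
  have hcost : (1 - ∑ _v ∈ approvers A c, β) / (approvers A c).card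
      = 1 / (approvers A c).card - β := by
    rw [sum_const, nsmul_eq_mul]
    field_simp
  have hβ' : β ≤ 1 / (approvers A c).card := by
    rw [le_div_iff₀ hpos]; exact hβ
  rw [phCost, hcost, max_eq_right (by linarith)]
  ring

theorem PhragReach.const_of_nonempty {β₁ β₂ : ℝ}
    (h₁ : ∀ c, β₁ * (approvers A c).card ≤ 1) (h₂ : ∀ c, β₂ * (approvers A c).card ≤ 1)
    {S : Finset C} {b : V → ℝ} (h : PhragReach A ∅ (fun _ => β₁) S b) (hS : S.Nonempty) :
    PhragReach A ∅ (fun _ => β₂) S b := by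
  induction h with
  | init => simp at hS
  | step S b c h hcS hne hmin ih =>
    rcases S.eq_empty_or_nonempty with rfl | hS
    · obtain rfl := h.eq_init_of_eq_empty rfl
      have hfirst := PhragReach.step (A := A) (b₀ := fun _ => β₂) ∅ _ c .init hcS hne
        fun c' hc' hne' => by
          have := hmin c' hc' hne'
          linarith [add_phCost_const hne (h₁ c), add_phCost_const hne' (h₁ c'),
            add_phCost_const hne (h₂ c), add_phCost_const hne' (h₂ c')]
      simpa only [add_phCost_const hne (h₁ c), add_phCost_const hne (h₂ c)] using hfirst
    · exact (ih hS).step S b c hcS hne hmin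

theorem exists_phragReach_const_iff {β₁ β₂ : ℝ}
    (h₁ : ∀ c, β₁ * (approvers A c).card ≤ 1) (h₂ : ∀ c, β₂ * (approvers A c).card ≤ 1)
    {S : Finset C} :
    (∃ b, PhragReach A ∅ (fun _ => β₁) S b) ↔ ∃ b, PhragReach A ∅ (fun _ => β₂) S b := by
  rcases S.eq_empty_or_nonempty with rfl | hS
  · exact ⟨fun _ => ⟨_, .init⟩, fun _ => ⟨_, .init⟩⟩
  · exact ⟨fun ⟨b, h⟩ => ⟨b, h.const_of_nonempty h₁ h₂ hS⟩,
      fun ⟨b, h⟩ => ⟨b, h.const_of_nonempty h₂ h₁ hS⟩⟩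

end Phragmen

section Abstainers

variable {C V : Type} [DecidableEq C] [Fintype V] (A : V → Finset C) (N : ℕ)

theorem approvers_extApproval (c : C) :
    approvers (extApproval A N) c = (approvers A c).map .inl := by
  ext (v | j) <;> simp only [approvers, mem_filter, mem_univ, true_and, mem_map] <;> simp [extApproval]

theorem card_approvers_extApproval (c : C) :
    (approvers (extApproval A N) c).card = (approvers A c).card := by
  rw [approvers_extApproval, card_map]

theorem nonempty_approvers_extApproval (c : C) :
    (approvers (extApproval A N) c).Nonempty ↔ (approvers A c).Nonempty := by
  rw [approvers_extApproval, map_nonempty]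

theorem phCost_extApproval (b : V ⊕ Fin N → ℝ) (c : C) :
    phCost (extApproval A N) b c = phCost A (fun v => b (.inl v)) c := by
  rw [phCost, phCost, approvers_extApproval, sum_map, card_map]
  rfl

variable {A N}

theorem PhragReach.of_extApproval {S₀ S : Finset C} {b₀ b : V ⊕ Fin N → ℝ}
    (h : PhragReach (extApproval A N) S₀ b₀ S b) :
    PhragReach A S₀ (fun v => b₀ (.inl v)) S (fun v => b (.inl v)) := by
  induction h with
  | init => exact .init
  | step S b c _ hcS hne hmin ih =>
    have := ih.step _ _ c hcS ((nonempty_approvers_extApproval A N c).1 hne)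
      fun c' hc' hne' => by
        simpa only [phCost_extApproval] using
          hmin c' hc' ((nonempty_approvers_extApproval A N c').2 hne')
    simpa only [phCost_extApproval, extApproval] using this

theorem PhragReach.exists_extApproval {S₀ S : Finset C} {b₀ b : V → ℝ} (r₀ : ℝ)
    (h : PhragReach A S₀ b₀ S b) :
    ∃ r, PhragReach (extApproval A N) S₀ (Sum.elim b₀ fun _ => r₀) S (Sum.elim b fun _ => r) := by
  induction h with
  | init => exact ⟨r₀, .init⟩
  | step S b c _ hcS hne hmin ih =>
    obtain ⟨r, hr⟩ := ih
    have := hr.step _ _ c hcS ((nonempty_approvers_extApproval A N c).2 hne)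
      fun c' hc' hne' => by
        simpa only [phCost_extApproval, Sum.elim_inl] using
          hmin c' hc' ((nonempty_approvers_extApproval A N c').1 hne')
    refine ⟨r + phCost A b c, ?_⟩
    convert this using 1
    ext (v | j) <;> simp [extApproval, phCost_extApproval]

theorem exists_phragReach_extApproval_const_iff {S₀ S : Finset C} {β : ℝ} :
    (∃ b, PhragReach (extApproval A N) S₀ (fun _ => β) S b) ↔
      ∃ b, PhragReach A S₀ (fun _ => β) S b := by
  refine ⟨fun ⟨_, h⟩ => ⟨_, h.of_extApproval⟩, fun ⟨_, h⟩ => ?_⟩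
  obtain ⟨r, hr⟩ := h.exists_extApproval (N := N) β
  rw [Sum.elim_lam_const_lam_const] at hr
  exact ⟨_, hr⟩

end Abstainers

theorem stmt17_general {C V : Type} [DecidableEq C] [Fintype V]
    (A : V → Finset C) (k : ℕ)
    (N : ℕ) (hN : ∀ c : C, k * (approvers A c).card < Fintype.card V + N) :
    MESPhase1 (extApproval A N) k = {(∅ : Finset C)}
    ∧ MESFull (extApproval A N) k = Phragmen A k := by
  set β : ℝ := (k : ℝ) / Fintype.card (V ⊕ Fin N)
  have hβ : ∀ c, β * (approvers A c).card < 1 := fun c => by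
    have hM : (0 : ℝ) < Fintype.card (V ⊕ Fin N) := by
      rw [Fintype.card_sum, Fintype.card_fin]
      exact_mod_cast (Nat.zero_le _).trans_lt (hN c)
    rw [div_mul_eq_mul_div, div_lt_one hM, Fintype.card_sum, Fintype.card_fin]
    exact_mod_cast hN c
  have hunaffordable : ∀ c, ∑ _v ∈ approvers (extApproval A N) c, β < 1 := fun c => by
    rw [sum_const, card_approvers_extApproval, nsmul_eq_mul, mul_comm]
    exact hβ c
  refine ⟨mesPhase1_eq_of_forall_sum_lt_one hunaffordable, ?_⟩
  ext W
  simp only [mesFull_eq_of_forall_sum_lt_one hunaffordable, Phragmen, Set.mem_ofPred_eq,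
    exists_phragReach_extApproval_const_iff, exists_and_right]
  exact and_congr_left' (exists_phragReach_const_iff (fun c => (hβ c).le) (by simp))

theorem stmt17 {C V : Type} [Fintype C] [DecidableEq C] [Fintype V]
    (A : V → Finset C) (k : ℕ) (hk1 : 1 ≤ k) (hk2 : k ≤ Fintype.card C)
    (N : ℕ) (hN : ∀ c : C, k * (approvers A c).card < Fintype.card V + N) :
    MESPhase1 (extApproval A N) k = {(∅ : Finset C)}
    ∧ MESFull (extApproval A N) k = Phragmen A k :=
  stmt17_general A k N hN
end
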